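/- The seller's indifference price is dominated by the superhedging cost: if there exists x ∈ ℝ^J and z ∈ ℝ^m with ⟨p(ω), x⟩ + ⟨ΔX(ω), z⟩ ≥ c(ω) for all ω and Σ_j S^j(x^j) ≤ π, then φ(w̄ + π, c̄ + c) ≤ φ(w̄, c̄), hence π_s(w̄, c̄; c) ≤ π_sup(c), where π_sup(c) is the infimum of such costs π. (Assume no quantity constraints, i.e., D = ℝ^J, and that the feasible set for φ(w̄, c̄) is nonempty.) -/

import Mathlib

open Finset

variable {Ω : Type*} [Fintype Ω] {J m : ℕ}

/-- Optimal value function (no quantity constraints, i.e. `D = ℝ^J`),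
with value `⊤` when the budget constraint set is empty. -/
noncomputable def ssValue (P : Ω → ℝ) (v : ℝ → ℝ) (S : Fin J → ℝ → ℝ)
    (p : Ω → Fin J → ℝ) (ΔX : Ω → Fin m → ℝ) (w : ℝ) (c : Ω → ℝ) : EReal :=
  sInf {y : EReal | ∃ (x : Fin J → ℝ) (z : Fin m → ℝ), (∑ j, S j (x j)) ≤ w ∧
    y = ((∑ ω, P ω * v (c ω - (∑ j, p ω j * x j) - ∑ i, ΔX ω i * z i) : ℝ) : EReal)}

/-- Seller's indifference price (with `inf ∅ = +∞`). -/
noncomputable def piS (P : Ω → ℝ) (v : ℝ → ℝ) (S : Fin J → ℝ → ℝ)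
    (p : Ω → Fin J → ℝ) (ΔX : Ω → Fin m → ℝ) (wbar : ℝ) (cbar c : Ω → ℝ) : EReal :=
  sInf ((fun w : ℝ => (w : EReal)) ''
    {w : ℝ | ssValue P v S p ΔX (wbar + w) (fun ω => cbar ω + c ω)
              ≤ ssValue P v S p ΔX wbar cbar})

/-- Superhedging cost (with `inf ∅ = +∞`). -/
noncomputable def piSup (S : Fin J → ℝ → ℝ) (p : Ω → Fin J → ℝ)
    (ΔX : Ω → Fin m → ℝ) (c : Ω → ℝ) : EReal :=
  sInf {y : EReal | ∃ (x : Fin J → ℝ) (z : Fin m → ℝ),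
    (∀ ω, c ω ≤ (∑ j, p ω j * x j) + ∑ i, ΔX ω i * z i) ∧
    y = ((∑ j, S j (x j) : ℝ) : EReal)}

/-! Adding a superhedge `(x, z)` of cost at most `π` to any portfolio affordable with wealth
`w̄` gives, by subadditivity of the `S j`, a portfolio affordable with `w̄ + π` whose terminal
loss against `c̄ + c` is pointwise no larger; monotonicity of `v` finishes the argument. -/

theorem Finset.sum_apply_add_le_of_subadditive {ι : Type*} (s : Finset ι) {S : ι → ℝ → ℝ}
    (hS : ∀ j a b, S j (a + b) ≤ S j a + S j b) (x y : ι → ℝ) :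
    ∑ j ∈ s, S j (x j + y j) ≤ ∑ j ∈ s, S j (x j) + ∑ j ∈ s, S j (y j) := by
  rw [← sum_add_distrib]
  exact sum_le_sum fun j _ => hS j _ _

theorem Finset.sum_mul_comp_le_sum_mul_comp {α : Type*} (s : Finset α) {P : α → ℝ}
    (hP : ∀ ω, 0 ≤ P ω) {v : ℝ → ℝ} (hv : Monotone v) {a b : α → ℝ} (hab : ∀ ω, a ω ≤ b ω) :
    ∑ ω ∈ s, P ω * v (a ω) ≤ ∑ ω ∈ s, P ω * v (b ω) :=
  sum_le_sum fun ω _ => mul_le_mul_of_nonneg_left (hv (hab ω)) (hP ω)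

section SellerPrice

variable {P : Ω → ℝ} {v : ℝ → ℝ} {S : Fin J → ℝ → ℝ} {p : Ω → Fin J → ℝ}
  {ΔX : Ω → Fin m → ℝ} {wbar : ℝ} {cbar c : Ω → ℝ}

theorem ssValue_add_le_of_superhedge (hP : ∀ ω, 0 ≤ P ω) (hv : Monotone v)
    (hSsub : ∀ j a b, S j (a + b) ≤ S j a + S j b) {pi : ℝ} {x : Fin J → ℝ} {z : Fin m → ℝ}
    (hedge : ∀ ω, c ω ≤ (∑ j, p ω j * x j) + ∑ i, ΔX ω i * z i)
    (cost : (∑ j, S j (x j)) ≤ pi) :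
    ssValue P v S p ΔX (wbar + pi) (fun ω => cbar ω + c ω) ≤ ssValue P v S p ΔX wbar cbar := by
  refine le_sInf ?_
  rintro _ ⟨x', z', budget, rfl⟩
  have budget' : ∑ j, S j (x' j + x j) ≤ wbar + pi :=
    (sum_apply_add_le_of_subadditive _ hSsub x' x).trans (add_le_add budget cost)
  refine sInf_le_of_le ⟨x' + x, z' + z, budget', rfl⟩ (EReal.coe_le_coe ?_)
  refine sum_mul_comp_le_sum_mul_comp _ hP hv fun ω => ?_
  simp only [Pi.add_apply, mul_add, sum_add_distrib]
  linarith [hedge ω]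

theorem piS_le_piSup (hP : ∀ ω, 0 ≤ P ω) (hv : Monotone v)
    (hSsub : ∀ j a b, S j (a + b) ≤ S j a + S j b) :
    piS P v S p ΔX wbar cbar c ≤ piSup S p ΔX c := by
  refine le_sInf ?_
  rintro _ ⟨x, z, hedge, rfl⟩
  exact sInf_le ⟨_, ssValue_add_le_of_superhedge hP hv hSsub hedge le_rfl, rfl⟩

end SellerPrice

theorem sellerPrice_le_superhedging_general (P : Ω → ℝ) (hP : ∀ ω, 0 ≤ P ω)
    (v : ℝ → ℝ) (hv : Monotone v)
    (S : Fin J → ℝ → ℝ) (hSsub : ∀ j a b, S j (a + b) ≤ S j a + S j b)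
    (p : Ω → Fin J → ℝ) (ΔX : Ω → Fin m → ℝ) (wbar : ℝ) (cbar : Ω → ℝ)
    (c : Ω → ℝ) :
    (∀ (pi : ℝ) (x : Fin J → ℝ) (z : Fin m → ℝ),
      (∀ ω, c ω ≤ (∑ j, p ω j * x j) + ∑ i, ΔX ω i * z i) →
      (∑ j, S j (x j)) ≤ pi →
      ssValue P v S p ΔX (wbar + pi) (fun ω => cbar ω + c ω)
        ≤ ssValue P v S p ΔX wbar cbar) ∧
    piS P v S p ΔX wbar cbar c ≤ piSup S p ΔX c :=
  ⟨fun _ _ _ hedge cost => ssValue_add_le_of_superhedge hP hv hSsub hedge cost,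
    piS_le_piSup hP hv hSsub⟩

/-- The seller's indifference price is dominated by the superhedging cost. -/
theorem sellerPrice_le_superhedging (P : Ω → ℝ) (hP : ∀ ω, 0 ≤ P ω)
    (hP1 : ∑ ω, P ω = 1) (v : ℝ → ℝ) (hv : Monotone v)
    (S : Fin J → ℝ → ℝ) (hSsub : ∀ j a b, S j (a + b) ≤ S j a + S j b)
    (hSconv : ∀ j, ConvexOn ℝ Set.univ (S j))
    (p : Ω → Fin J → ℝ) (ΔX : Ω → Fin m → ℝ) (wbar : ℝ) (cbar : Ω → ℝ)
    (hfeas : ∃ (x : Fin J → ℝ), (∑ j, S j (x j)) ≤ wbar) (c : Ω → ℝ) :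
    (∀ (pi : ℝ) (x : Fin J → ℝ) (z : Fin m → ℝ),
      (∀ ω, c ω ≤ (∑ j, p ω j * x j) + ∑ i, ΔX ω i * z i) →
      (∑ j, S j (x j)) ≤ pi →
      ssValue P v S p ΔX (wbar + pi) (fun ω => cbar ω + c ω)
        ≤ ssValue P v S p ΔX wbar cbar) ∧
    piS P v S p ΔX wbar cbar c ≤ piSup S p ΔX c :=
  sellerPrice_le_superhedging_general P hP v hv S hSsub p ΔX wbar cbar c
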